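/- arXiv:1705.08435 — 3 statements merged into one kernel-verified Lean document; each statement's English description precedes it below -/
import Mathlib

section
/- Randomized block coordinate descent with uniform block sampling on a σ-strongly convex function f with block Lipschitz constants bounded by L_max satisfies, in expectation over the random block choices, E[f(x_T)] - f⋆ ≤ (1 - σ/(n·L_max))^T · (f(x₀) - f⋆). -/
/-!
Along block `i` the gradient is `Lᵢ`-Lipschitz, so the descent lemma shows that the step
`xᵢ ↦ xᵢ - ∇ᵢf(x)/Lᵢ` decreases `f` by at least `‖∇ᵢf(x)‖² / (2 L_max)`; averaging over
the uniformly chosen block removes `‖∇f(x)‖² / (2 n L_max)`. Strong convexity, tested at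
the minimizer `x⋆`, gives the Polyak–Łojasiewicz inequality `‖∇f(x)‖² ≥ 2σ (f(x) - f⋆)`,
so the expected gap contracts by the factor `1 - σ/(n L_max)` in each step. As `x_t`
depends only on the first `t` choices, the average over the choice at step `t` can be
taken pointwise in `x_t`, and the bound follows by induction on `t`.
-/

open scoped RealInnerProductSpace

open Function

section Smooth

variable {E : Type*} [NormedAddCommGroup E] [InnerProductSpace ℝ E]

theorem neg_sq_norm_div_le_inner_add_mul_sq_norm {σ : ℝ} (hσ : 0 < σ) (u v : E) :
    -(‖u‖ ^ 2 / (2 * σ)) ≤ ⟪u, v⟫ + σ / 2 * ‖v‖ ^ 2 := by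
  have h : 0 ≤ ‖u + σ • v‖ ^ 2 := sq_nonneg _
  rw [norm_add_sq_real, real_inner_smul_right, norm_smul, Real.norm_eq_abs, abs_of_pos hσ] at h
  have key : ⟪u, v⟫ + σ / 2 * ‖v‖ ^ 2 + ‖u‖ ^ 2 / (2 * σ) =
      (‖u‖ ^ 2 + 2 * (σ * ⟪u, v⟫) + (σ * ‖v‖) ^ 2) / (2 * σ) := by
    field_simp
    ring
  rw [neg_le_iff_add_nonneg, key]
  positivity

variable [CompleteSpace E]

theorem le_add_inner_add_sq_norm_of_lipschitz_gradient {g : E → ℝ} {g' : E → E} {K : ℝ}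
    (hg : ∀ z, HasGradientAt g (g' z) z) (hK : ∀ a b, ‖g' b - g' a‖ ≤ K * ‖b - a‖) (x y : E) :
    g y ≤ g x + ⟪g' x, y - x⟫ + K / 2 * ‖y - x‖ ^ 2 := by
  set d := y - x
  let ψ : ℝ → ℝ := fun s => g (x + s • d) - s * ⟪g' x, d⟫ - K / 2 * s ^ 2 * ‖d‖ ^ 2
  have hψ : ∀ s, HasDerivAt ψ (⟪g' (x + s • d) - g' x, d⟫ - K * s * ‖d‖ ^ 2) s := by
    intro s
    have hline : HasDerivAt (fun s : ℝ => x + s • d) d s := by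
      simpa using ((hasDerivAt_id s).smul_const d).const_add x
    have hgs := (hg (x + s • d)).hasFDerivAt.comp_hasDerivAt s hline
    simp only [InnerProductSpace.toDual_apply_apply] at hgs
    refine ((hgs.sub ((hasDerivAt_id s).mul_const ⟪g' x, d⟫)).sub
      (((hasDerivAt_pow 2 s).const_mul (K / 2)).mul_const (‖d‖ ^ 2))).congr_deriv ?_
    rw [inner_sub_left]
    ring
  have hψ_anti : AntitoneOn ψ (Set.Icc 0 1) := by
    refine antitoneOn_of_hasDerivWithinAt_nonpos (convex_Icc 0 1)
      (fun s _ => (hψ s).continuousAt.continuousWithinAt)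
      (fun s _ => (hψ s).hasDerivWithinAt) fun s hs => ?_
    rw [interior_Icc] at hs
    have hstep : ‖x + s • d - x‖ = s * ‖d‖ := by
      rw [add_sub_cancel_left, norm_smul, Real.norm_of_nonneg hs.1.le]
    calc ⟪g' (x + s • d) - g' x, d⟫ - K * s * ‖d‖ ^ 2
        ≤ K * (s * ‖d‖) * ‖d‖ - K * s * ‖d‖ ^ 2 := by
          gcongr
          exact (real_inner_le_norm _ _).trans
            (mul_le_mul_of_nonneg_right (hstep ▸ hK _ _) (norm_nonneg d))
      _ = 0 := by ring
  have h01 := hψ_anti (Set.left_mem_Icc.2 zero_le_one) (Set.right_mem_Icc.2 zero_le_one)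
    zero_le_one
  simp only [ψ, zero_smul, add_zero, one_smul, zero_mul, sub_zero, one_mul, one_pow,
    add_sub_cancel, d] at h01
  linarith

theorem apply_sub_smul_gradient_le {g : E → ℝ} {g' : E → E} {K : ℝ}
    (hg : ∀ z, HasGradientAt g (g' z) z) (hK : ∀ a b, ‖g' b - g' a‖ ≤ K * ‖b - a‖) (hK0 : 0 < K)
    (x : E) : g (x - (1 / K) • g' x) ≤ g x - ‖g' x‖ ^ 2 / (2 * K) := by
  have h := le_add_inner_add_sq_norm_of_lipschitz_gradient hg hK x (x - (1 / K) • g' x)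
  rw [sub_sub_cancel_left, inner_neg_right, real_inner_smul_right, real_inner_self_eq_norm_sq,
    norm_neg, norm_smul, Real.norm_of_nonneg (by positivity)] at h
  convert h using 1
  field_simp
  ring

end Smooth

section BlockCoordinateDescent

variable {ι E : Type*} [NormedAddCommGroup E] [InnerProductSpace ℝ E]

theorem two_mul_sub_le_sum_sq_norm_of_strongConvex [Fintype ι] {f : (ι → E) → ℝ} {G : ι → E}
    {σ : ℝ} (hσ : 0 < σ) {x y : ι → E}
    (hsc : f y ≥ f x + (∑ i, ⟪G i, y i - x i⟫) + σ / 2 * ∑ i, ‖y i - x i‖ ^ 2) :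
    2 * σ * (f x - f y) ≤ ∑ i, ‖G i‖ ^ 2 := by
  have hyoung : -((∑ i, ‖G i‖ ^ 2) / (2 * σ)) ≤
      (∑ i, ⟪G i, y i - x i⟫) + σ / 2 * ∑ i, ‖y i - x i‖ ^ 2 := by
    simp only [Finset.sum_div, ← Finset.sum_neg_distrib, Finset.mul_sum, ← Finset.sum_add_distrib]
    exact Finset.sum_le_sum fun i _ => neg_sq_norm_div_le_inner_add_mul_sq_norm hσ _ _
  rw [← le_div_iff₀' (by positivity)]
  linarith

variable [DecidableEq ι]

noncomputable def bcdStep (G : (ι → E) → ι → E) (L : ι → ℝ) (x : ι → E) (i : ι) : ι → E :=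
  update x i (x i - (1 / L i) • G x i)

variable [CompleteSpace E] {f : (ι → E) → ℝ} {G : (ι → E) → ι → E} {L : ι → ℝ}

theorem apply_bcdStep_le
    (hgrad : ∀ x i, HasGradientAt (fun θ => f (update x i θ)) (G x i) (x i))
    (hlip : ∀ x i (h : E), ‖G (update x i (x i + h)) i - G x i‖ ≤ L i * ‖h‖)
    {i : ι} (hLi : 0 < L i) (x : ι → E) :
    f (bcdStep G L x i) ≤ f x - ‖G x i‖ ^ 2 / (2 * L i) := by
  have hblock_grad : ∀ θ, HasGradientAt (fun θ => f (update x i θ)) (G (update x i θ) i) θ := by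
    intro θ
    simpa using hgrad (update x i θ) i
  have hblock_lip : ∀ a b, ‖G (update x i b) i - G (update x i a) i‖ ≤ L i * ‖b - a‖ := by
    intro a b
    simpa using hlip (update x i a) i (b - a)
  simpa [bcdStep] using apply_sub_smul_gradient_le hblock_grad hblock_lip hLi (x i)

theorem sum_bcdStep_div_card_sub_le [Fintype ι] [Nonempty ι]
    (hgrad : ∀ x i, HasGradientAt (fun θ => f (update x i θ)) (G x i) (x i))
    (hlip : ∀ x i (h : E), ‖G (update x i (x i + h)) i - G x i‖ ≤ L i * ‖h‖)
    (hLpos : ∀ i, 0 < L i) {Lmax : ℝ} (hLmax : ∀ i, L i ≤ Lmax) {σ : ℝ} (hσ : 0 < σ)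
    {xstar : ι → E}
    (hsc : ∀ x, f xstar ≥ f x + (∑ i, ⟪G x i, xstar i - x i⟫) +
      σ / 2 * ∑ i, ‖xstar i - x i‖ ^ 2) (x : ι → E) :
    (∑ i, (f (bcdStep G L x i) - f xstar)) / Fintype.card ι ≤
      (1 - σ / (Fintype.card ι * Lmax)) * (f x - f xstar) := by
  obtain ⟨i₀⟩ := ‹Nonempty ι›
  have hLmax_pos : 0 < Lmax := (hLpos i₀).trans_le (hLmax i₀)
  have hcard : (0 : ℝ) < Fintype.card ι := by exact_mod_cast Fintype.card_pos
  have hdescent : ∀ i, f (bcdStep G L x i) - f xstar ≤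
      f x - f xstar - ‖G x i‖ ^ 2 / (2 * Lmax) := by
    intro i
    have hLi := hLpos i
    have hstep_le := apply_bcdStep_le hgrad hlip hLi x
    have hLi_le : ‖G x i‖ ^ 2 / (2 * Lmax) ≤ ‖G x i‖ ^ 2 / (2 * L i) := by
      gcongr
      exact hLmax i
    linarith
  have hpl := two_mul_sub_le_sum_sq_norm_of_strongConvex hσ (hsc x)
  rw [div_le_iff₀ hcard]
  calc ∑ i, (f (bcdStep G L x i) - f xstar)
      ≤ ∑ i, (f x - f xstar - ‖G x i‖ ^ 2 / (2 * Lmax)) := Finset.sum_le_sum fun i _ => hdescent i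
    _ = Fintype.card ι * (f x - f xstar) - (∑ i, ‖G x i‖ ^ 2) / (2 * Lmax) := by
      rw [Finset.sum_sub_distrib, Finset.sum_const, Finset.card_univ, nsmul_eq_mul,
        Finset.sum_div]
    _ ≤ Fintype.card ι * (f x - f xstar) - 2 * σ * (f x - f xstar) / (2 * Lmax) := by
      gcongr
    _ = (1 - σ / (Fintype.card ι * Lmax)) * (f x - f xstar) * Fintype.card ι := by
      field_simp

end BlockCoordinateDescent

theorem Fintype.sum_sum_comp_update {ι β M : Type*} [Fintype ι] [DecidableEq ι] [Fintype β]
    [AddCommMonoid M] (t : ι) (F : (ι → β) → M) :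
    ∑ b, ∑ ω, F (update ω t b) = Fintype.card β • ∑ ω, F ω := by
  let swap : Equiv.Perm ((ι → β) × β) :=
    Function.Involutive.toPerm (fun q => (update q.1 t q.2, q.1 t)) fun q => by simp
  calc ∑ b, ∑ ω, F (update ω t b)
      = ∑ q : (ι → β) × β, F (swap q).1 := by
        rw [Fintype.sum_prod_type, Finset.sum_comm]
        rfl
    _ = ∑ q : (ι → β) × β, F q.1 := Equiv.sum_comp swap fun q => F q.1
    _ = Fintype.card β • ∑ ω, F ω := by
        simp only [Fintype.sum_prod_type, Finset.sum_const, Finset.card_univ, Finset.smul_sum]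

theorem Fin.le_pow_mul_of_le_mul {T : ℕ} {s : Fin (T + 1) → ℝ} {r : ℝ} (hs : ∀ t, 0 ≤ s t)
    (h : ∀ t : Fin T, s t.succ ≤ r * s t.castSucc) (t : Fin (T + 1)) :
    s t ≤ r ^ (t : ℕ) * s 0 := by
  induction t using Fin.induction with
  | zero => simp
  | succ u ih =>
    rcases le_or_gt 0 r with hr | hr
    · calc s u.succ ≤ r * s u.castSucc := h u
        _ ≤ r * (r ^ (u : ℕ) * s 0) := mul_le_mul_of_nonneg_left ih hr
        _ = r ^ (u.succ : ℕ) * s 0 := by rw [Fin.val_succ, pow_succ']; ring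
    · -- for `r < 0`, `0 ≤ s 1 ≤ r * s 0` forces `s 0 = 0`
      have hT : 0 < T := Fin.pos u
      have h0 : s 0 = 0 := by
        have h1 := h ⟨0, hT⟩
        rw [show (⟨0, hT⟩ : Fin T).castSucc = 0 from Fin.ext rfl] at h1
        nlinarith [hs (Fin.succ ⟨0, hT⟩), hs 0]
      rw [h0, mul_zero]
      nlinarith [h u, hs u.castSucc]

section UniformRandomChoices

variable {α β : Type*} {T : ℕ} {φ : α → β → α} {x₀ : α}
  {xseq : (Fin T → β) → Fin (T + 1) → α}

theorem trajectory_update_eq (h0 : ∀ ω, xseq ω 0 = x₀)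
    (hstep : ∀ ω t, xseq ω t.succ = φ (xseq ω t.castSucc) (ω t)) (ω : Fin T → β) (t : Fin T)
    (b : β) : xseq (update ω t b) t.castSucc = xseq ω t.castSucc := by
  suffices ∀ s : Fin (T + 1), s ≤ t.castSucc → xseq (update ω t b) s = xseq ω s from
    this _ le_rfl
  intro s
  induction s using Fin.induction with
  | zero => simp [h0]
  | succ u ih =>
    intro hu
    have hut : u < t := Fin.succ_le_castSucc_iff.mp hu
    rw [hstep, hstep, ih (Fin.castSucc_le_castSucc_iff.mpr hut.le), update_of_ne hut.ne]

theorem card_mul_sum_trajectory_succ [Fintype β] (h0 : ∀ ω, xseq ω 0 = x₀)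
    (hstep : ∀ ω t, xseq ω t.succ = φ (xseq ω t.castSucc) (ω t)) (V : α → ℝ) (t : Fin T) :
    Fintype.card β * ∑ ω, V (xseq ω t.succ) = ∑ ω, ∑ b, V (φ (xseq ω t.castSucc) b) := by
  rw [← nsmul_eq_mul, ← Fintype.sum_sum_comp_update t, Finset.sum_comm]
  simp only [hstep, trajectory_update_eq h0 hstep, update_self]

theorem sum_trajectory_last_div_le [Fintype β] [Nonempty β] (h0 : ∀ ω, xseq ω 0 = x₀)
    (hstep : ∀ ω t, xseq ω t.succ = φ (xseq ω t.castSucc) (ω t)) {V : α → ℝ}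
    (hV : ∀ x, 0 ≤ V x) {r : ℝ} (hcontract : ∀ x, (∑ b, V (φ x b)) / Fintype.card β ≤ r * V x) :
    (∑ ω, V (xseq ω (Fin.last T))) / Fintype.card β ^ T ≤ r ^ T * V x₀ := by
  have hcard : (0 : ℝ) < Fintype.card β := by exact_mod_cast Fintype.card_pos
  have hone_step : ∀ t : Fin T,
      ∑ ω, V (xseq ω t.succ) ≤ r * ∑ ω, V (xseq ω t.castSucc) := by
    intro t
    rw [← mul_le_mul_iff_right₀ hcard, card_mul_sum_trajectory_succ h0 hstep, Finset.mul_sum,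
      Finset.mul_sum]
    refine Finset.sum_le_sum fun ω _ => ?_
    have hx := hcontract (xseq ω t.castSucc)
    rw [div_le_iff₀ hcard] at hx
    linarith
  have hgeom := Fin.le_pow_mul_of_le_mul (s := fun t => ∑ ω, V (xseq ω t))
    (fun t => Finset.sum_nonneg fun ω _ => hV _) hone_step (Fin.last T)
  simp only [Fin.val_last, h0, Finset.sum_const, Finset.card_univ, Fintype.card_fun,
    Fintype.card_fin, nsmul_eq_mul, Nat.cast_pow] at hgeom
  rw [div_le_iff₀ (by positivity)]
  linarith

end UniformRandomChoices

/-- Linear convergence (in expectation) of randomized block coordinate descent with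
uniform block sampling on a σ-strongly convex function:
`E[f(x_T)] - f⋆ ≤ (1 - σ/(n L_max))^T (f(x₀) - f⋆)`.
The expectation is the uniform average over all sequences of block choices. -/
theorem randomized_bcd_linear_convergence
    {n p : ℕ} (hn : 0 < n)
    (f : (Fin n → EuclideanSpace ℝ (Fin p)) → ℝ)
    (G : (Fin n → EuclideanSpace ℝ (Fin p)) → Fin n → EuclideanSpace ℝ (Fin p))
    (hgrad : ∀ x i, HasGradientAt (fun θ => f (Function.update x i θ)) (G x i) (x i))
    (σ : ℝ) (hσ : 0 < σ)
    -- σ-strong convexity of f (with full gradient given blockwise):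
    (hsc : ∀ x y, f y ≥ f x + (∑ i, ⟪G x i, y i - x i⟫) + σ / 2 * ∑ i, ‖y i - x i‖ ^ 2)
    (L : Fin n → ℝ) (hLpos : ∀ i, 0 < L i)
    (hlip : ∀ x (i : Fin n) (h : EuclideanSpace ℝ (Fin p)),
      ‖G (Function.update x i (x i + h)) i - G x i‖ ≤ L i * ‖h‖)
    (Lmax : ℝ) (hLmax : ∀ i, L i ≤ Lmax)
    (fstar : ℝ) (xstar : Fin n → EuclideanSpace ℝ (Fin p))
    (hfstar : f xstar = fstar) (hmin : ∀ y, fstar ≤ f y)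
    (T : ℕ) (x0 : Fin n → EuclideanSpace ℝ (Fin p))
    -- trajectory driven by a sequence of block choices ω:
    (xseq : (Fin T → Fin n) → Fin (T + 1) → (Fin n → EuclideanSpace ℝ (Fin p)))
    (h0 : ∀ ω, xseq ω 0 = x0)
    (hstep : ∀ ω (t : Fin T),
      xseq ω t.succ =
        Function.update (xseq ω t.castSucc) (ω t)
          (xseq ω t.castSucc (ω t) - (1 / L (ω t)) • G (xseq ω t.castSucc) (ω t))) :
    (∑ ω : Fin T → Fin n, f (xseq ω (Fin.last T))) / (n : ℝ) ^ T - fstar ≤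
      (1 - σ / (n * Lmax)) ^ T * (f x0 - fstar) := by
  subst hfstar
  have : Nonempty (Fin n) := ⟨⟨0, hn⟩⟩
  have h := sum_trajectory_last_div_le (φ := bcdStep G L) (V := fun x => f x - f xstar) h0 hstep
    (fun x => sub_nonneg.2 (hmin x))
    (sum_bcdStep_div_card_sub_le hgrad hlip hLpos hLmax hσ fun x => hsc x xstar)
  have hn_pow : (n : ℝ) ^ T ≠ 0 := by positivity
  simpa only [Fintype.card_fin, Finset.sum_sub_distrib, Finset.sum_const, Finset.card_univ,
    Fintype.card_fun, nsmul_eq_mul, Nat.cast_pow, sub_div, mul_div_cancel_left₀ _ hn_pow] using h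
end

section
/- The L¹-sensitivity of one block coordinate descent update is at most 2μcᵢD_{ii}L₀/(mᵢLᵢ): for two neighboring datasets of agent i, the published iterates Θᵢ(t+1) computed from the same Θ(t) differ in L¹-norm by at most 2μcᵢD_{ii}L₀/(mᵢLᵢ). -/
/-!
Only the data-dependent gradient term survives in the difference of the two updates, scaled by
`Dᵢᵢμcᵢ/(mᵢLᵢ)`; since the datasets differ in one point, the difference of the summed gradients is
the difference of two pointwise gradients, each of L¹-norm at most `L₀`.
-/

open Finset

section L1Norm

variable {ι : Type*} [Fintype ι]

def l1Norm (x : EuclideanSpace ℝ ι) : ℝ := ∑ i, |x i|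

lemma l1Norm_smul (a : ℝ) (x : EuclideanSpace ℝ ι) : l1Norm (a • x) = |a| * l1Norm x := by
  simp only [l1Norm, PiLp.smul_apply, smul_eq_mul, abs_mul, mul_sum]

lemma l1Norm_sub_le (x y : EuclideanSpace ℝ ι) : l1Norm (x - y) ≤ l1Norm x + l1Norm y := by
  simp only [l1Norm, PiLp.sub_apply, ← sum_add_distrib]
  exact sum_le_sum fun i _ => abs_sub _ _

end L1Norm

lemma Finset.sum_sub_sum_eq_of_eq_of_ne {ι M : Type*} [Fintype ι] [AddCommGroup M]
    {f g : ι → M} (k₀ : ι) (h : ∀ k, k ≠ k₀ → f k = g k) :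
    ∑ k, f k - ∑ k, g k = f k₀ - g k₀ := by
  rw [← sum_sub_distrib, sum_eq_single_of_mem k₀ (mem_univ _)]
  intro k _ hk
  rw [h k hk, sub_self]

lemma update_sub_update {𝕜 E : Type*} [Field 𝕜] [AddCommGroup E] [Module 𝕜 E]
    (L D κ : 𝕜) (θ w g₁ g₂ : E) :
    (θ - (1 / L) • (D • (θ + κ • g₁) - w)) - (θ - (1 / L) • (D • (θ + κ • g₂) - w))
      = -(1 / L * D * κ) • (g₁ - g₂) := by
  simp only [smul_sub, smul_add, smul_smul, neg_smul, mul_assoc]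
  abel

theorem bcd_update_l1_sensitivity_general
    {p n : ℕ} {Z : Type*} (m : ℕ)
    (μ c Lloc Dii L₀ lam : ℝ)
    (hμ : 0 < μ) (hc : 0 < c) (hLloc : 0 < Lloc) (hD : 0 < Dii)
    (Li : ℝ) (hLi : Li = Dii * (1 + μ * c * Lloc))
    (W : Fin n → ℝ)
    (gℓ : Z → EuclideanSpace ℝ (Fin p) → EuclideanSpace ℝ (Fin p))
    -- L₀-Lipschitzness of ℓ(·;x,y) w.r.t. ‖·‖₁ gives the dual bound ‖∇ℓ‖₁ ≤ L₀:
    (hbound : ∀ z θ, ∑ i, |gℓ z θ i| ≤ L₀)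
    (S₁ S₂ : Fin m → Z)
    (hneighbor : ∃ k₀ : Fin m, ∀ k, k ≠ k₀ → S₁ k = S₂ k)
    (Θ : Fin n → EuclideanSpace ℝ (Fin p))  -- all current models Θ(t)
    (θ : EuclideanSpace ℝ (Fin p))          -- agent i's current model Θᵢ(t)
    -- regularized empirical loss gradients for the two datasets:
    (g₁ g₂ : EuclideanSpace ℝ (Fin p))
    (hg₁ : g₁ = ((1 : ℝ) / m) • (∑ k, gℓ (S₁ k) θ) + (2 * lam) • θ)
    (hg₂ : g₂ = ((1 : ℝ) / m) • (∑ k, gℓ (S₂ k) θ) + (2 * lam) • θ)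
    -- updates Θᵢ(t+1) = Θᵢ(t) - (1/Lᵢ)[∇Q(Θ(t))]ᵢ for the two datasets:
    (upd₁ upd₂ : EuclideanSpace ℝ (Fin p))
    (hupd₁ : upd₁ = θ - (1 / Li) • (Dii • (θ + (μ * c) • g₁) - ∑ j, W j • Θ j))
    (hupd₂ : upd₂ = θ - (1 / Li) • (Dii • (θ + (μ * c) • g₂) - ∑ j, W j • Θ j)) :
    ∑ i, |(upd₁ - upd₂) i| ≤ 2 * μ * c * Dii * L₀ / (m * Li) := by
  obtain ⟨k₀, hk₀⟩ := hneighbor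
  set u := gℓ (S₁ k₀) θ
  set v := gℓ (S₂ k₀) θ
  have hLi_nonneg : 0 ≤ Li := by rw [hLi]; positivity
  set a : ℝ := 1 / Li * Dii * (μ * c) * (1 / m)
  have ha : 0 ≤ a := by positivity
  have hdiff : upd₁ - upd₂ = -a • (u - v) := by
    rw [hupd₁, hupd₂, update_sub_update, hg₁, hg₂, add_sub_add_right_eq_sub, ← smul_sub,
      sum_sub_sum_eq_of_eq_of_ne k₀ fun k hk => by rw [hk₀ k hk], smul_smul, neg_mul]
  calc l1Norm (upd₁ - upd₂) = a * l1Norm (u - v) := by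
        rw [hdiff, l1Norm_smul, abs_neg, abs_of_nonneg ha]
    _ ≤ a * (L₀ + L₀) := by
        gcongr
        exact (l1Norm_sub_le u v).trans (add_le_add (hbound _ _) (hbound _ _))
    _ = 2 * μ * c * Dii * L₀ / (m * Li) := by
        simp only [a]; field_simp; ring

/-- L¹-sensitivity of one block coordinate descent update: for two neighboring
datasets of agent `i`, the published iterates `Θᵢ(t+1)` computed from the same
current state differ in L¹-norm by at most `2μcᵢD_{ii}L₀/(mᵢLᵢ)`. -/
theorem bcd_update_l1_sensitivity
    {p n : ℕ} {Z : Type*} (m : ℕ) (hm : 0 < m)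
    (μ c Lloc Dii L₀ lam : ℝ)
    (hμ : 0 < μ) (hc : 0 < c) (hLloc : 0 < Lloc) (hD : 0 < Dii) (hL₀ : 0 ≤ L₀)
    (Li : ℝ) (hLi : Li = Dii * (1 + μ * c * Lloc))
    (W : Fin n → ℝ) (hW : ∀ j, 0 ≤ W j) (hWsum : ∑ j, W j = Dii)
    (ℓ : Z → EuclideanSpace ℝ (Fin p) → ℝ)
    (gℓ : Z → EuclideanSpace ℝ (Fin p) → EuclideanSpace ℝ (Fin p))
    (hgrad : ∀ z θ, HasGradientAt (ℓ z) (gℓ z θ) θ)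
    -- L₀-Lipschitzness of ℓ(·;x,y) w.r.t. ‖·‖₁ gives the dual bound ‖∇ℓ‖₁ ≤ L₀:
    (hbound : ∀ z θ, ∑ i, |gℓ z θ i| ≤ L₀)
    (S₁ S₂ : Fin m → Z)
    (hneighbor : ∃ k₀ : Fin m, ∀ k, k ≠ k₀ → S₁ k = S₂ k)
    (Θ : Fin n → EuclideanSpace ℝ (Fin p))  -- all current models Θ(t)
    (θ : EuclideanSpace ℝ (Fin p))          -- agent i's current model Θᵢ(t)
    -- regularized empirical loss gradients for the two datasets:
    (g₁ g₂ : EuclideanSpace ℝ (Fin p))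
    (hg₁ : g₁ = ((1 : ℝ) / m) • (∑ k, gℓ (S₁ k) θ) + (2 * lam) • θ)
    (hg₂ : g₂ = ((1 : ℝ) / m) • (∑ k, gℓ (S₂ k) θ) + (2 * lam) • θ)
    -- updates Θᵢ(t+1) = Θᵢ(t) - (1/Lᵢ)[∇Q(Θ(t))]ᵢ for the two datasets:
    (upd₁ upd₂ : EuclideanSpace ℝ (Fin p))
    (hupd₁ : upd₁ = θ - (1 / Li) • (Dii • (θ + (μ * c) • g₁) - ∑ j, W j • Θ j))
    (hupd₂ : upd₂ = θ - (1 / Li) • (Dii • (θ + (μ * c) • g₂) - ∑ j, W j • Θ j)) :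
    ∑ i, |(upd₁ - upd₂) i| ≤ 2 * μ * c * Dii * L₀ / (m * Li) :=
  bcd_update_l1_sensitivity_general m μ c Lloc Dii L₀ lam hμ hc hLloc hD Li hLi W gℓ hbound S₁ S₂
    hneighbor Θ θ g₁ g₂ hg₁ hg₂ upd₁ upd₂ hupd₁ hupd₂
end

section
/- Optimal noise allocation: for fixed A > 0, C ∈ (0,1), T ≥ 1 and budget ε̄ > 0, the minimizer of F(ε₀,…,ε_{T-1}) = Σ_{t=0}^{T-1} A²·C^t/ε_t² over positive ε_t with Σ_t ε_t = ε̄ is ε_t* = ((C^{1/3} - 1)/(C^{T/3} - 1))·C^{t/3}·ε̄. -/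
/-!
With `r = C^{1/3}` the proposed allocation is `ε̄ r^t / ∑_{i<T} r^i`, so it spends the budget
exactly and its cubes are proportional to `C^t`. Under this KKT condition the tangent lines of
the convex summands `a / x²` all have the same slope, so their sum is constant on the budget
hyperplane and bounds the objective from below there, with equality at the allocation.
-/

open Finset Real

lemma div_sq_tangent_le {a x y : ℝ} (ha : 0 ≤ a) (hx : 0 < x) (hy : 0 < y) :
    a / y ^ 2 - 2 * (a / y ^ 3) * (x - y) ≤ a / x ^ 2 := by
  have gap : a / x ^ 2 - (a / y ^ 2 - 2 * (a / y ^ 3) * (x - y)) =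
      a * (x - y) ^ 2 * (2 * x + y) / (x ^ 2 * y ^ 3) := by
    field_simp
    ring
  have : 0 ≤ a * (x - y) ^ 2 * (2 * x + y) / (x ^ 2 * y ^ 3) := by positivity
  linarith

theorem sum_div_sq_le_of_div_cube_eq {ι : Type*} (s : Finset ι) {a x y : ι → ℝ} {μ : ℝ}
    (ha : ∀ i ∈ s, 0 ≤ a i) (hx : ∀ i ∈ s, 0 < x i) (hy : ∀ i ∈ s, 0 < y i)
    (hμ : ∀ i ∈ s, a i / y i ^ 3 = μ) (hsum : ∑ i ∈ s, x i = ∑ i ∈ s, y i) :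
    ∑ i ∈ s, a i / y i ^ 2 ≤ ∑ i ∈ s, a i / x i ^ 2 := calc
  ∑ i ∈ s, a i / y i ^ 2 = ∑ i ∈ s, (a i / y i ^ 2 - 2 * μ * (x i - y i)) := by
    rw [sum_sub_distrib, ← mul_sum, sum_sub_distrib, hsum, sub_self, mul_zero, sub_zero]
  _ ≤ ∑ i ∈ s, a i / x i ^ 2 := sum_le_sum fun i hi => by
    simpa only [hμ i hi] using div_sq_tangent_le (ha i hi) (hx i hi) (hy i hi)

lemma rpow_natCast_div {x : ℝ} (hx : 0 ≤ x) (n : ℕ) (y : ℝ) : x ^ (n / y) = (x ^ (1 / y)) ^ n := by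
  rw [← rpow_mul_natCast hx]
  ring_nf

lemma sum_pow_div_geom_sum_mul (r c : ℝ) {T : ℕ} (h : ∑ i ∈ range T, r ^ i ≠ 0) :
    ∑ t : Fin T, r ^ (t : ℕ) / (∑ i ∈ range T, r ^ i) * c = c := by
  rw [← sum_mul, ← sum_div, Fin.sum_univ_eq_sum_range (r ^ ·), div_self h, one_mul]

theorem optimal_noise_allocation_general
    (A C εbar : ℝ) (hC0 : 0 < C) (hC1 : C < 1) (hεbar : 0 < εbar)
    (T : ℕ) (hT : 1 ≤ T)
    (εstar : Fin T → ℝ)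
    (hεstar : ∀ t : Fin T,
      εstar t = (C ^ ((1 : ℝ) / 3) - 1) / (C ^ ((T : ℝ) / 3) - 1) *
        C ^ ((t : ℝ) / 3) * εbar) :
    (∀ t, 0 < εstar t) ∧ (∑ t, εstar t = εbar) ∧
      ∀ ε : Fin T → ℝ, (∀ t, 0 < ε t) → (∑ t, ε t = εbar) →
        ∑ t : Fin T, A ^ 2 * C ^ (t : ℕ) / (εstar t) ^ 2 ≤
          ∑ t : Fin T, A ^ 2 * C ^ (t : ℕ) / (ε t) ^ 2 := by
  set r := C ^ ((1 : ℝ) / 3) with hr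
  have hr0 : 0 < r := by positivity
  have hr1 : r ≠ 1 := (rpow_lt_one hC0.le hC1 (by norm_num)).ne
  have hr3 : r ^ 3 = C := by
    rw [hr, ← rpow_natCast_div hC0.le]
    norm_num
  set S := ∑ i ∈ range T, r ^ i
  have hS : 0 < S := geom_sum_pos hr0.le (by omega)
  have hεstar_geom : ∀ t : Fin T, εstar t = r ^ (t : ℕ) / S * εbar := fun t => by
    rw [hεstar, rpow_natCast_div hC0.le, rpow_natCast_div hC0.le, ← hr, ← inv_div,
      ← geom_sum_eq hr1]
    ring
  have hpos : ∀ t, 0 < εstar t := fun t => by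
    rw [hεstar_geom]
    positivity
  have hsum : ∑ t, εstar t = εbar := by
    simp_rw [hεstar_geom]
    exact sum_pow_div_geom_sum_mul r εbar hS.ne'
  refine ⟨hpos, hsum, fun ε hε hεsum => ?_⟩
  refine sum_div_sq_le_of_div_cube_eq univ (μ := A ^ 2 * S ^ 3 / εbar ^ 3)
    (fun t _ => by positivity) (fun t _ => hε t) (fun t _ => hpos t) (fun t _ => ?_)
    (hεsum.trans hsum.symm)
  rw [hεstar_geom, ← hr3]
  field_simp
  ring

/-- Optimal noise allocation: for fixed `A > 0`, `C ∈ (0,1)`, `T ≥ 1` and budget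
`ε̄ > 0`, the minimizer of `F(ε) = Σ_t A² C^t / ε_t²` over positive `ε_t` with
`Σ_t ε_t = ε̄` is `ε_t* = ((C^{1/3}-1)/(C^{T/3}-1)) C^{t/3} ε̄`. -/
theorem optimal_noise_allocation
    (A C εbar : ℝ) (hA : 0 < A) (hC0 : 0 < C) (hC1 : C < 1) (hεbar : 0 < εbar)
    (T : ℕ) (hT : 1 ≤ T)
    (εstar : Fin T → ℝ)
    (hεstar : ∀ t : Fin T,
      εstar t = (C ^ ((1 : ℝ) / 3) - 1) / (C ^ ((T : ℝ) / 3) - 1) *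
        C ^ ((t : ℝ) / 3) * εbar) :
    (∀ t, 0 < εstar t) ∧ (∑ t, εstar t = εbar) ∧
      ∀ ε : Fin T → ℝ, (∀ t, 0 < ε t) → (∑ t, ε t = εbar) →
        ∑ t : Fin T, A ^ 2 * C ^ (t : ℕ) / (εstar t) ^ 2 ≤
          ∑ t : Fin T, A ^ 2 * C ^ (t : ℕ) / (ε t) ^ 2 :=
  optimal_noise_allocation_general A C εbar hC0 hC1 hεbar T hT εstar hεstar
end
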